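/- arXiv:2512.02721 — 5 statements merged into one kernel-verified Lean document; each statement's English description precedes it below -/
import Mathlib

section
/- For probability distributions p and q on a finite alphabet Z with q(z) > 0 for all z, the relative entropy satisfies the Donsker–Varadhan variational formula: D(p‖q) = sup over functions T : Z → ℝ of { E_p[T] − ln E_q[e^T] }. -/
open Real Finset

/-- Gibbs' inequality: relative entropy is nonnegative. -/
lemma gibbs_nonneg {Z : Type*} [Fintype Z]
    (p r : Z → ℝ) (hp : ∀ z, 0 ≤ p z) (hps : ∑ z, p z = 1)
    (hr : ∀ z, 0 < r z) (hrs : ∑ z, r z = 1) :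
    0 ≤ ∑ z, p z * Real.log (p z / r z) := by
  have key : ∑ z, p z * Real.log (r z / p z) ≤ 0 := by
    have h1 : ∑ z, p z * Real.log (r z / p z) ≤ ∑ z, (r z - p z) := by
      apply Finset.sum_le_sum
      intro z _
      rcases eq_or_lt_of_le (hp z) with h | h
      · simp [← h]; linarith [(hr z).le]
      · have hpos : 0 < r z / p z := div_pos (hr z) h
        have := Real.log_le_sub_one_of_pos hpos
        calc p z * Real.log (r z / p z) ≤ p z * (r z / p z - 1) := by
              exact mul_le_mul_of_nonneg_left this (hp z)
          _ = r z - p z := by field_simp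
    simpa [Finset.sum_sub_distrib, hps, hrs] using h1
  have heq : ∑ z, p z * Real.log (p z / r z) = -∑ z, p z * Real.log (r z / p z) := by
    rw [← Finset.sum_neg_distrib]
    apply Finset.sum_congr rfl
    intro z _
    rcases eq_or_lt_of_le (hp z) with h | h
    · simp [← h]
    · rw [show p z / r z = (r z / p z)⁻¹ by rw [inv_div], Real.log_inv]
      ring
  linarith [key, heq ▸ neg_nonneg.mpr key]

/-- Upper bound in Donsker–Varadhan. -/
lemma dv_upper {Z : Type*} [Fintype Z] [Nonempty Z]
    (p q : Z → ℝ) (hp : ∀ z, 0 ≤ p z) (hps : ∑ z, p z = 1)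
    (hq : ∀ z, 0 < q z) (T : Z → ℝ) :
    ∑ z, p z * T z - Real.log (∑ z, q z * Real.exp (T z)) ≤
      ∑ z, p z * Real.log (p z / q z) := by
  set S := ∑ z, q z * Real.exp (T z) with hS
  have hSpos : 0 < S := by
    apply Finset.sum_pos
    · intro z _; exact mul_pos (hq z) (Real.exp_pos _)
    · exact Finset.univ_nonempty
  set r : Z → ℝ := fun z => q z * Real.exp (T z) / S with hrdef
  have hr : ∀ z, 0 < r z := fun z => div_pos (mul_pos (hq z) (Real.exp_pos _)) hSpos
  have hrs : ∑ z, r z = 1 := by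
    rw [hrdef]
    simp only [div_eq_mul_inv, ← Finset.sum_mul]
    rw [← hS, mul_inv_cancel₀ (ne_of_gt hSpos)]
  have hg := gibbs_nonneg p r hp hps hr hrs
  have heq : ∑ z, p z * Real.log (p z / r z)
      = ∑ z, p z * Real.log (p z / q z) - ∑ z, p z * T z + Real.log S := by
    have : ∑ z, p z * Real.log (p z / r z)
        = ∑ z, (p z * Real.log (p z / q z) - p z * T z + p z * Real.log S) := by
      apply Finset.sum_congr rfl
      intro z _
      rcases eq_or_lt_of_le (hp z) with h | h
      · simp [← h]
      · have hqz := hq z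
        have hez := Real.exp_pos (T z)
        have hlr : Real.log (r z) = Real.log (q z) + T z - Real.log S := by
          rw [hrdef]
          rw [Real.log_div (by positivity) (ne_of_gt hSpos),
            Real.log_mul (ne_of_gt hqz) (ne_of_gt hez), Real.log_exp]
        rw [Real.log_div (ne_of_gt h) (ne_of_gt (hr z)),
          Real.log_div (ne_of_gt h) (ne_of_gt hqz), hlr]
        ring
    rw [this, Finset.sum_add_distrib, Finset.sum_sub_distrib, ← Finset.sum_mul, hps]
    ring
  linarith [heq ▸ hg]

/-- Donsker–Varadhan variational formula for the relative entropy on a finite alphabet. -/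
theorem donsker_varadhan_log {Z : Type*} [Fintype Z] [Nonempty Z]
    (p q : Z → ℝ) (hp : ∀ z, 0 ≤ p z) (hps : ∑ z, p z = 1)
    (hq : ∀ z, 0 < q z) (hqs : ∑ z, q z = 1) :
    ∑ z, p z * Real.log (p z / q z) =
      ⨆ T : Z → ℝ, (∑ z, p z * T z - Real.log (∑ z, q z * Real.exp (T z))) := by
  set D := ∑ z, p z * Real.log (p z / q z) with hD
  set f : (Z → ℝ) → ℝ :=
    fun T => ∑ z, p z * T z - Real.log (∑ z, q z * Real.exp (T z)) with hf
  have hub : ∀ T, f T ≤ D := fun T => dv_upper p q hp hps hq T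
  have hbdd : BddAbove (Set.range f) := by
    refine ⟨D, ?_⟩
    rintro x ⟨T, rfl⟩
    exact hub T
  apply le_antisymm
  · -- D ≤ sup
    apply le_of_forall_pos_le_add
    intro ε hε
    set A : ℝ := ∑ z, (if p z = 0 then q z else 0) with hA
    have hA0 : 0 ≤ A := Finset.sum_nonneg fun z _ => by
      split <;> [exact (hq z).le; rfl]
    set c : ℝ := A / ε with hc
    set T : Z → ℝ := fun z => if p z = 0 then -c else Real.log (p z / q z) with hT
    have h1 : ∑ z, p z * T z = D := by
      apply Finset.sum_congr rfl
      intro z _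
      by_cases h : p z = 0 <;> simp [hT, h]
    have h2 : ∑ z, q z * Real.exp (T z) = 1 + Real.exp (-c) * A := by
      have : ∀ z ∈ Finset.univ, q z * Real.exp (T z)
          = p z + Real.exp (-c) * (if p z = 0 then q z else 0) := by
        intro z _
        by_cases h : p z = 0
        · simp [hT, h]; ring
        · have hpz : 0 < p z := lt_of_le_of_ne (hp z) (Ne.symm h)
          simp only [hT, h, if_false]
          rw [Real.exp_log (div_pos hpz (hq z))]
          rw [mul_div_assoc', mul_div_cancel_left₀ _ (ne_of_gt (hq z))]
          ring
        
      rw [Finset.sum_congr rfl this, Finset.sum_add_distrib, hps, ← Finset.mul_sum, ← hA]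
    have hx0 : 0 ≤ Real.exp (-c) * A := mul_nonneg (Real.exp_pos _).le hA0
    have hlog : Real.log (1 + Real.exp (-c) * A) ≤ Real.exp (-c) * A := by
      have := Real.log_le_sub_one_of_pos (show (0:ℝ) < 1 + Real.exp (-c) * A by linarith)
      linarith
    have hsmall : Real.exp (-c) * A ≤ ε := by
      have h3 : c < Real.exp c := by linarith [Real.add_one_le_exp c]
      have : A < ε * Real.exp c := by
        have : A / ε < Real.exp c := by rw [← hc]; exact h3
        calc A = ε * (A / ε) := by field_simp
          _ < ε * Real.exp c := by exact mul_lt_mul_of_pos_left this hε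
      rw [Real.exp_neg]
      rw [mul_comm, ← div_eq_mul_inv, div_le_iff₀ (Real.exp_pos c)]
      nlinarith [Real.exp_pos c]
    have hval : D - ε ≤ f T := by
      simp only [hf, h1, h2]
      linarith
    have hle : f T ≤ ⨆ T, f T := le_ciSup hbdd T
    linarith
  · exact ciSup_le hub
end

section
/- For probability distributions p and q on a finite alphabet Z with q(z) > 0 for all z, D(p‖q) = sup over functions T : Z → ℝ of { E_p[T] + 1 − E_q[e^T] }. -/
open Filter Topology

private lemma dv_key (x u : ℝ) (hx : 0 ≤ x) :
    x * u ≤ x * Real.log x - x + Real.exp u := by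
  rcases hx.eq_or_lt with h | h
  · simp only [← h, Real.log_zero, zero_mul, mul_zero, sub_zero, zero_add]
    linarith [Real.exp_pos u]
  · have h1 : (u - Real.log x) + 1 ≤ Real.exp (u - Real.log x) :=
      Real.add_one_le_exp _
    have h2 : Real.exp (u - Real.log x) = Real.exp u / x := by
      rw [Real.exp_sub, Real.exp_log h]
    have h3 : x * ((u - Real.log x) + 1) ≤ x * (Real.exp u / x) := by
      rw [← h2]; exact mul_le_mul_of_nonneg_left h1 h.le
    have h4 : x * (Real.exp u / x) = Real.exp u := by
      field_simp
    nlinarith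

/-- Shifted Donsker–Varadhan variational formula for the relative entropy. -/
theorem donsker_varadhan_shifted {Z : Type*} [Fintype Z] [Nonempty Z]
    (p q : Z → ℝ) (hp : ∀ z, 0 ≤ p z) (hps : ∑ z, p z = 1)
    (hq : ∀ z, 0 < q z) (hqs : ∑ z, q z = 1) :
    ∑ z, p z * Real.log (p z / q z) =
      ⨆ T : Z → ℝ, (∑ z, p z * T z + 1 - ∑ z, q z * Real.exp (T z)) := by
  set D := ∑ z, p z * Real.log (p z / q z) with hD
  set f : (Z → ℝ) → ℝ := fun T => ∑ z, p z * T z + 1 - ∑ z, q z * Real.exp (T z)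
    with hf
  have hub : ∀ T : Z → ℝ, f T ≤ D := by
    intro T
    have hpt : ∀ z, p z * T z ≤
        p z * Real.log (p z / q z) - p z + q z * Real.exp (T z) := by
      intro z
      have hqz := (hq z).ne'
      have key := dv_key (p z / q z) (T z) (div_nonneg (hp z) (hq z).le)
      have h3 := mul_le_mul_of_nonneg_left key (hq z).le
      have e1 : q z * (p z / q z * T z) = p z * T z := by
        field_simp
      have e2 : q z * (p z / q z * Real.log (p z / q z) - p z / q z
          + Real.exp (T z))
          = p z * Real.log (p z / q z) - p z + q z * Real.exp (T z) := by
        field_simp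
      rw [e1, e2] at h3
      exact h3
    have hsum : ∑ z, p z * T z ≤
        ∑ z, (p z * Real.log (p z / q z) - p z + q z * Real.exp (T z)) :=
      Finset.sum_le_sum fun z _ => hpt z
    rw [Finset.sum_add_distrib, Finset.sum_sub_distrib, hps] at hsum
    simp only [hf, hD]
    linarith
  have hbdd : BddAbove (Set.range f) := by
    refine ⟨D, ?_⟩
    rintro x ⟨T, rfl⟩
    exact hub T
  refine le_antisymm ?_ (ciSup_le hub)
  -- approximating family
  set g : ℝ → ℝ := fun ε => ∑ z, p z * Real.log (p z / q z + ε) - ε with hg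
  have hg_le : ∀ ε ∈ Set.Ioi (0 : ℝ), g ε ≤ ⨆ T, f T := by
    intro ε hε
    have hε' : (0 : ℝ) < ε := hε
    set T : Z → ℝ := fun z => Real.log (p z / q z + ε) with hT
    have hval : f T = g ε := by
      have hexp : ∀ z, Real.exp (T z) = p z / q z + ε := by
        intro z
        exact Real.exp_log (add_pos_of_nonneg_of_pos (div_nonneg (hp z) (hq z).le) hε')
      have hsum2 : ∑ z, q z * Real.exp (T z) = 1 + ε := by
        have : ∀ z ∈ Finset.univ, q z * Real.exp (T z) = p z + q z * ε := by
          intro z _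
          have hqz := (hq z).ne'
          rw [hexp z]
          field_simp
        rw [Finset.sum_congr rfl this, Finset.sum_add_distrib, hps,
          ← Finset.sum_mul, hqs, one_mul]
      simp only [hf, hg, hsum2]
      simp only [hT]
      ring
    calc g ε = f T := hval.symm
      _ ≤ ⨆ T, f T := le_ciSup hbdd T
  have hg_tendsto : Tendsto g (𝓝[>] (0 : ℝ)) (𝓝 D) := by
    have hsum_t : Tendsto (fun ε => ∑ z, p z * Real.log (p z / q z + ε))
        (𝓝[>] (0 : ℝ)) (𝓝 D) := by
      rw [hD]
      refine tendsto_finset_sum _ fun z _ => ?_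
      rcases (hp z).eq_or_lt with h | h
      · simp only [← h, zero_mul]
        exact tendsto_const_nhds
      · have hc : (0 : ℝ) < p z / q z := div_pos h (hq z)
        have hcont : ContinuousAt (fun ε : ℝ => p z * Real.log (p z / q z + ε))
            0 := by
          have : ContinuousAt (fun ε : ℝ => p z / q z + ε) 0 :=
            (continuous_const.add continuous_id).continuousAt
          exact (Real.continuousAt_log (by simpa using hc.ne')).comp this
            |>.const_smul (p z) |>.congr (Filter.Eventually.of_forall fun _ => rfl)
        have := hcont.tendsto
        simp only [add_zero] at this
        exact this.mono_left nhdsWithin_le_nhds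
    have hid : Tendsto (fun ε : ℝ => ε) (𝓝[>] (0 : ℝ)) (𝓝 0) :=
      tendsto_id.mono_left nhdsWithin_le_nhds
    have := hsum_t.sub hid
    simpa using this
  exact le_of_tendsto hg_tendsto (Filter.eventually_of_mem self_mem_nhdsWithin hg_le)
end

section
/- The function μ ↦ −ln[ (1/2)(1 − tanh(√(μ²+1))/√(μ²+1)) ] is not convex on ℝ; in particular, there exist points μ₁, μ₂ and t ∈ (0,1) such that the function evaluated at tμ₁ + (1−t)μ₂ exceeds the corresponding convex combination of values. -/
lemma my_tanh_lt_one (x : ℝ) : Real.tanh x < 1 := by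
  rw [Real.tanh_eq_sinh_div_cosh, div_lt_one (Real.cosh_pos x)]
  nlinarith [Real.cosh_sub_sinh x, Real.exp_pos (-x)]

lemma my_tanh_one_gt : (0.71 : ℝ) < Real.tanh 1 := by
  rw [Real.tanh_eq_sinh_div_cosh, Real.sinh_eq, Real.cosh_eq, lt_div_iff₀ (by positivity)]
  have hE : (2.7182818283 : ℝ) < Real.exp 1 := Real.exp_one_gt_d9
  have hE' : Real.exp 1 < 2.7182818286 := Real.exp_one_lt_d9
  have h : Real.exp (-1) = (Real.exp 1)⁻¹ := Real.exp_neg 1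
  rw [h]
  have hpos : (0:ℝ) < Real.exp 1 := Real.exp_pos 1
  have h2 : (Real.exp 1)⁻¹ < 1/2.7182818283 := by
    rw [inv_eq_one_div]
    apply div_lt_div_of_pos_left (by norm_num) (by norm_num) (by linarith [hE] : (2.7182818283:ℝ) < Real.exp 1)
  have h3 : (0:ℝ) < (Real.exp 1)⁻¹ := by positivity
  nlinarith

lemma key_ineq : Real.tanh (Real.sqrt 2) / Real.sqrt 2 < Real.tanh 1 := by
  have h2 : (1.41 : ℝ) ≤ Real.sqrt 2 := by
    rw [show (1.41:ℝ) = Real.sqrt (1.41^2) by rw [Real.sqrt_sq] ; norm_num]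
    exact Real.sqrt_le_sqrt (by norm_num)
  have hpos : (0:ℝ) < Real.sqrt 2 := by positivity
  have h1 : Real.tanh (Real.sqrt 2) / Real.sqrt 2 < 1 / Real.sqrt 2 :=
    div_lt_div_of_pos_right (my_tanh_lt_one _) hpos
  have h3 : (1:ℝ) / Real.sqrt 2 < 0.71 := by
    rw [div_lt_iff₀ hpos]; nlinarith
  linarith [my_tanh_one_gt]

/-- The function `μ ↦ −ln[(1/2)(1 − tanh(√(μ²+1))/√(μ²+1))]` is not convex on ℝ;
in particular there are points witnessing a violation of the convexity inequality. -/
theorem single_qubit_rel_ent_not_convex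
    (f : ℝ → ℝ)
    (hf : ∀ μ, f μ =
      -Real.log ((1 / 2) * (1 - Real.tanh (Real.sqrt (μ ^ 2 + 1)) / Real.sqrt (μ ^ 2 + 1)))) :
    ¬ ConvexOn ℝ Set.univ f ∧
      ∃ (μ₁ μ₂ t : ℝ), t ∈ Set.Ioo (0 : ℝ) 1 ∧
        t * f μ₁ + (1 - t) * f μ₂ < f (t * μ₁ + (1 - t) * μ₂) := by
  have key : ∀ μ₁ μ₂ t : ℝ, μ₁ = -1 → μ₂ = 1 → t = 1/2 →
      t * f μ₁ + (1 - t) * f μ₂ < f (t * μ₁ + (1 - t) * μ₂) := by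
    rintro _ _ _ rfl rfl rfl
    have e1 : ((-1:ℝ))^2 + 1 = 2 := by norm_num
    have e2 : ((1:ℝ))^2 + 1 = 2 := by norm_num
    have e0 : ((1:ℝ)/2 * (-1) + (1 - 1/2) * 1) = 0 := by norm_num
    rw [e0, hf, hf, hf, e1, e2]
    norm_num [Real.sqrt_one]
    have hb := my_tanh_one_gt
    have ha := my_tanh_lt_one 1
    have hk := key_ineq
    have hy : (0:ℝ) < 1/2 * (1 - Real.tanh 1) := by nlinarith
    have hlt : Real.log (1/2 * (1 - Real.tanh 1)) <
        Real.log (1/2 * (1 - Real.tanh (Real.sqrt 2) / Real.sqrt 2)) := by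
      apply Real.log_lt_log hy; nlinarith
    linarith
  have hviol := key (-1) 1 (1/2) rfl rfl rfl
  constructor
  · intro hc
    have := hc.2 (Set.mem_univ (-1 : ℝ)) (Set.mem_univ (1 : ℝ))
      (by norm_num : (0:ℝ) ≤ 1/2) (by norm_num : (0:ℝ) ≤ 1/2) (by norm_num)
    simp only [smul_eq_mul] at this
    have h12 : (1:ℝ) - 1/2 = 1/2 := by norm_num
    rw [← h12] at this
    linarith
  · exact ⟨-1, 1, 1/2, by norm_num, hviol⟩
end

section
/- For probability distributions p and q on a finite alphabet Z with q(z) > 0 everywhere, and α ∈ (1, ∞), the Rényi relative quasi-entropy satisfies Q_α(p‖q) = sup over T : Z → ℝ of { α E_p[e^{((α−1)/α) T(Z)}] + (1−α) E_q[e^{T(Z)}] }. -/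
lemma key_bound {α : ℝ} (hα : 1 < α) {p q : ℝ} (hp : 0 ≤ p) (hq : 0 < q) (t : ℝ) :
    α * (p * Real.exp ((α - 1) / α * t)) + (1 - α) * (q * Real.exp t)
      ≤ p ^ α * q ^ (1 - α) := by
  have hα0 : (0:ℝ) < α := lt_trans one_pos hα
  have hα1 : (0:ℝ) < α - 1 := by linarith
  set c := (α - 1) / α with hc
  set a := p * q ^ ((1 - α) / α) with ha_def
  set b := (q * Real.exp t) ^ c with hb_def
  have hqe : (0:ℝ) < q * Real.exp t := mul_pos hq (Real.exp_pos t)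
  have hconj : α.HolderConjugate (α / (α - 1)) := Real.HolderConjugate.conjExponent hα
  have young : a * b ≤ a ^ α / α + b ^ (α / (α - 1)) / (α / (α - 1)) :=
    Real.young_inequality_of_nonneg
      (mul_nonneg hp (Real.rpow_nonneg hq.le _)) (Real.rpow_nonneg hqe.le _) hconj
  have hab : a * b = p * Real.exp (c * t) := by
    rw [ha_def, hb_def, Real.mul_rpow hq.le (Real.exp_pos t).le, mul_comm c t,
      Real.exp_mul]
    rw [mul_assoc, ← mul_assoc (q ^ ((1 - α) / α)), ← Real.rpow_add hq]
    have : (1 - α) / α + c = 0 := by rw [hc]; field_simp; ring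
    rw [this, Real.rpow_zero, one_mul]
  have ha_pow : a ^ α = p ^ α * q ^ (1 - α) := by
    rw [ha_def, Real.mul_rpow hp (Real.rpow_nonneg hq.le _), ← Real.rpow_mul hq.le,
      div_mul_cancel₀ _ hα0.ne']
  have hb_pow : b ^ (α / (α - 1)) = q * Real.exp t := by
    rw [hb_def, ← Real.rpow_mul hqe.le]
    have : c * (α / (α - 1)) = 1 := by rw [hc]; field_simp
    rw [this, Real.rpow_one]
  rw [hab, ha_pow, hb_pow] at young
  have h2 := mul_le_mul_of_nonneg_left young hα0.le
  have hdiv : q * Real.exp t / (α / (α - 1)) = q * Real.exp t * (α - 1) / α := by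
    field_simp
  rw [hdiv] at h2
  field_simp at h2
  nlinarith [h2]

/-- Variational representation of the Rényi relative quasi-entropy for `α > 1`:
`Q_α(p‖q) = sup_T { α E_p[e^{((α−1)/α)T}] + (1−α) E_q[e^T] }`. -/
theorem renyi_quasi_entropy_sup {Z : Type*} [Fintype Z] [Nonempty Z] (α : ℝ) (hα : 1 < α)
    (p q : Z → ℝ) (hp : ∀ z, 0 ≤ p z) (hps : ∑ z, p z = 1)
    (hq : ∀ z, 0 < q z) (hqs : ∑ z, q z = 1) :
    ∑ z, p z ^ α * q z ^ (1 - α) =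
      ⨆ T : Z → ℝ,
        (α * ∑ z, p z * Real.exp ((α - 1) / α * T z)
          + (1 - α) * ∑ z, q z * Real.exp (T z)) := by
  have hα0 : (0:ℝ) < α := lt_trans one_pos hα
  have hα1 : (0:ℝ) < α - 1 := by linarith
  set f : (Z → ℝ) → ℝ := fun T =>
    α * ∑ z, p z * Real.exp ((α - 1) / α * T z)
      + (1 - α) * ∑ z, q z * Real.exp (T z) with hf
  set Q : ℝ := ∑ z, p z ^ α * q z ^ (1 - α) with hQ
  have hf_sum : ∀ T, f T = ∑ z,
      (α * (p z * Real.exp ((α - 1) / α * T z)) + (1 - α) * (q z * Real.exp (T z))) := by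
    intro T
    rw [hf]
    simp [Finset.mul_sum, Finset.sum_add_distrib]
  have hub : ∀ T, f T ≤ Q := by
    intro T
    rw [hf_sum, hQ]
    exact Finset.sum_le_sum fun z _ => key_bound hα (hp z) (hq z) (T z)
  have hbdd : BddAbove (Set.range f) := ⟨Q, by rintro _ ⟨T, rfl⟩; exact hub T⟩
  refine le_antisymm ?_ (ciSup_le hub)
  refine le_of_forall_pos_le_add ?_
  intro ε hε
  set M := -Real.log (ε / (α - 1)) with hM
  set T : Z → ℝ := fun z => if p z = 0 then -M else α * Real.log (p z / q z) with hT
  have hterm : ∀ z : Z, p z ^ α * q z ^ (1 - α) - ε * q z ≤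
      α * (p z * Real.exp ((α - 1) / α * T z)) + (1 - α) * (q z * Real.exp (T z)) := by
    intro z
    by_cases hz : p z = 0
    · have hTz : T z = -M := by simp [hT, hz]
      have hexp : Real.exp (T z) = ε / (α - 1) := by
        rw [hTz, hM, neg_neg, Real.exp_log (div_pos hε hα1)]
      rw [hz, Real.zero_rpow hα0.ne', hexp]
      have : (1 - α) * (q z * (ε / (α - 1))) = -(ε * q z) := by
        field_simp; ring
      rw [this]
      simp
    · have hpz : 0 < p z := lt_of_le_of_ne (hp z) (Ne.symm hz)
      have hTz : T z = α * Real.log (p z / q z) := by simp [hT, hz]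
      have hL : Real.log (p z / q z) = Real.log (p z) - Real.log (q z) :=
        Real.log_div hz (hq z).ne'
      have hval : p z ^ α * q z ^ (1 - α) =
          α * (p z * Real.exp ((α - 1) / α * T z)) + (1 - α) * (q z * Real.exp (T z)) := by
        have e1 : (α - 1) / α * T z = (α - 1) * (Real.log (p z) - Real.log (q z)) := by
          rw [hTz, hL]; field_simp
        have e2 : T z = α * (Real.log (p z) - Real.log (q z)) := by rw [hTz, hL]
        have h1 : p z * Real.exp ((α - 1) / α * T z) = p z ^ α * q z ^ (1 - α) := by
          rw [e1, Real.rpow_def_of_pos hpz, Real.rpow_def_of_pos (hq z),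
            ← Real.exp_log hpz, ← Real.exp_add, ← Real.exp_add]
          congr 1
          simp [Real.log_exp]; ring
        have h2 : q z * Real.exp (T z) = p z ^ α * q z ^ (1 - α) := by
          rw [e2, Real.rpow_def_of_pos hpz, Real.rpow_def_of_pos (hq z),
            ← Real.exp_log (hq z), ← Real.exp_add, ← Real.exp_add]
          congr 1
          simp [Real.log_exp]; ring
        rw [h1, h2]; ring
      nlinarith [mul_pos hε (hq z)]
  have hfT : Q - ε ≤ f T := by
    rw [hf_sum]
    calc Q - ε = ∑ z, (p z ^ α * q z ^ (1 - α) - ε * q z) := by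
          rw [Finset.sum_sub_distrib, ← Finset.mul_sum, hqs, mul_one, hQ]
    _ ≤ _ := Finset.sum_le_sum fun z _ => hterm z
  have := le_ciSup hbdd T
  linarith
end

section
/- For probability distributions p and q on a finite alphabet Z with p(z), q(z) > 0 everywhere, and α ∈ (0, 1), the Rényi relative quasi-entropy satisfies Q_α(p‖q) = inf over T : Z → ℝ of { α E_p[e^{((α−1)/α) T(Z)}] + (1−α) E_q[e^{T(Z)}] }. -/
/-- Variational representation of the Rényi relative quasi-entropy for `α ∈ (0,1)`:
`Q_α(p‖q) = inf_T { α E_p[e^{((α−1)/α)T}] + (1−α) E_q[e^T] }`. -/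
theorem renyi_quasi_entropy_inf {Z : Type*} [Fintype Z] [Nonempty Z]
    (α : ℝ) (hα : α ∈ Set.Ioo (0 : ℝ) 1)
    (p q : Z → ℝ) (hp : ∀ z, 0 < p z) (hps : ∑ z, p z = 1)
    (hq : ∀ z, 0 < q z) (hqs : ∑ z, q z = 1) :
    ∑ z, p z ^ α * q z ^ (1 - α) =
      ⨅ T : Z → ℝ,
        (α * ∑ z, p z * Real.exp ((α - 1) / α * T z)
          + (1 - α) * ∑ z, q z * Real.exp (T z)) := by
  obtain ⟨hα0, hα1⟩ := hα
  set S := ∑ z, p z ^ α * q z ^ (1 - α) with hS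
  have key : ∀ T : Z → ℝ,
      S ≤ α * ∑ z, p z * Real.exp ((α - 1) / α * T z)
          + (1 - α) * ∑ z, q z * Real.exp (T z) := by
    intro T
    rw [Finset.mul_sum, Finset.mul_sum, ← Finset.sum_add_distrib]
    apply Finset.sum_le_sum
    intro z _
    have h1 : (0:ℝ) < p z * Real.exp ((α - 1) / α * T z) :=
      mul_pos (hp z) (Real.exp_pos _)
    have h2 : (0:ℝ) < q z * Real.exp (T z) := mul_pos (hq z) (Real.exp_pos _)
    have hgm := Real.geom_mean_le_arith_mean2_weighted (w₁ := α) (w₂ := 1 - α)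
      hα0.le (by linarith) h1.le h2.le (by ring)
    refine le_trans (le_of_eq ?_) hgm
    have hzero : ((α - 1) / α * T z) * α + T z * (1 - α) = 0 := by
      field_simp
      ring
    rw [Real.mul_rpow (hp z).le (Real.exp_pos _).le,
        Real.mul_rpow (hq z).le (Real.exp_pos _).le,
        ← Real.exp_mul, ← Real.exp_mul, mul_mul_mul_comm, ← Real.exp_add,
        hzero, Real.exp_zero, mul_one]
  refine le_antisymm (le_ciInf key) ?_
  have hbdd : BddBelow (Set.range fun T : Z → ℝ =>
      α * ∑ z, p z * Real.exp ((α - 1) / α * T z)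
          + (1 - α) * ∑ z, q z * Real.exp (T z)) :=
    ⟨S, by rintro x ⟨T, rfl⟩; exact key T⟩
  refine le_trans (ciInf_le hbdd (fun z => α * Real.log (p z / q z))) (le_of_eq ?_)
  have e1 : ∀ z : Z, p z * Real.exp ((α - 1) / α * (α * Real.log (p z / q z)))
      = p z ^ α * q z ^ (1 - α) := by
    intro z
    have hpq : (0:ℝ) < p z / q z := div_pos (hp z) (hq z)
    have h : (α - 1) / α * (α * Real.log (p z / q z)) = Real.log (p z / q z) * (α - 1) := by
      field_simp
    rw [h, Real.exp_mul, Real.exp_log hpq, Real.div_rpow (hp z).le (hq z).le,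
        Real.rpow_sub (hp z), Real.rpow_sub (hq z), Real.rpow_one, Real.rpow_one,
        Real.rpow_sub (hq z), Real.rpow_one]
    field_simp [(hp z).ne', (hq z).ne']
  have e2 : ∀ z : Z, q z * Real.exp (α * Real.log (p z / q z))
      = p z ^ α * q z ^ (1 - α) := by
    intro z
    have hpq : (0:ℝ) < p z / q z := div_pos (hp z) (hq z)
    rw [mul_comm α, Real.exp_mul, Real.exp_log hpq,
        Real.div_rpow (hp z).le (hq z).le, Real.rpow_sub (hq z), Real.rpow_one]
    field_simp
  simp only [e1, e2]
  ring
end
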